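/- Let μ be a Borel probability measure on [0,1] such that for some constant M one has H_n(μ) ≥ n − M for all n ∈ ℕ. Then μ is absolutely continuous with respect to Lebesgue measure. -/

import Mathlib

open MeasureTheory Set

noncomputable section

/-- `-(x * log₂ x)`, with the convention `0 · log₂ 0 = 0`. -/
def nlog2 (x : ℝ) : ℝ := -(x * Real.logb 2 x)

/-- The dyadic interval of generation `n` indexed by `k : ℤ`. -/
def dyadicI (n : ℕ) (k : ℤ) : Set ℝ := Set.Ico ((k : ℝ) / 2 ^ n) (((k : ℝ) + 1) / 2 ^ n)

/-- `n`-scale entropy `H_n(μ)` of a measure on `ℝ`. -/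
def scaleEnt (μ : Measure ℝ) (n : ℕ) : ℝ := ∑' k : ℤ, nlog2 (μ (dyadicI n k)).toReal

/-! ### Auxiliary lemmas on `nlog2` -/

lemma nlog2_zero : nlog2 0 = 0 := by simp [nlog2]

lemma nlog2_eq (x : ℝ) : nlog2 x = Real.negMulLog x / Real.log 2 := by
  simp only [nlog2, Real.negMulLog, Real.logb, div_eq_mul_inv, neg_mul]
  ring

lemma negMulLog_le_one {x : ℝ} (hx : 0 ≤ x) : Real.negMulLog x ≤ 1 := by
  rcases eq_or_lt_of_le hx with h | h
  · simp [← h]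
  · have h1 : Real.log x⁻¹ ≤ x⁻¹ - 1 := Real.log_le_sub_one_of_pos (by positivity)
    rw [Real.log_inv] at h1
    have h2 := mul_le_mul_of_nonneg_left h1 hx
    have h3 : x * x⁻¹ = 1 := mul_inv_cancel₀ (ne_of_gt h)
    rw [Real.negMulLog]
    nlinarith

lemma nlog2_le_two {x : ℝ} (hx : 0 ≤ x) : nlog2 x ≤ 2 := by
  rw [nlog2_eq]
  have h2 : (0.6931471803 : ℝ) < Real.log 2 := Real.log_two_gt_d9
  have := negMulLog_le_one hx
  rw [div_le_iff₀ (by linarith)]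
  nlinarith

lemma concaveOn_nlog2 : ConcaveOn ℝ (Set.Ici 0) nlog2 := by
  have := Real.concaveOn_negMulLog.smul (c := (Real.log 2)⁻¹) (by positivity)
  have heq : nlog2 = fun x => (Real.log 2)⁻¹ • x.negMulLog := by
    ext x
    rw [nlog2_eq, smul_eq_mul, div_eq_inv_mul]
  rw [heq]; exact this

/-- Jensen-type entropy bound: the entropy of a nonnegative vector supported on at most
`N` indices is at most `nlog2` of its total mass plus the mass times `log₂ N`. -/
lemma sum_nlog2_le {ι : Type*} (F : Finset ι) (p : ι → ℝ) (hp : ∀ i ∈ F, 0 ≤ p i)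
    {N : ℝ} (hcard : (F.card : ℝ) ≤ N) :
    ∑ i ∈ F, nlog2 (p i) ≤ nlog2 (∑ i ∈ F, p i) + (∑ i ∈ F, p i) * Real.logb 2 N := by
  set s := ∑ i ∈ F, p i with hs
  have hs0 : 0 ≤ s := Finset.sum_nonneg hp
  rcases eq_or_lt_of_le hs0 with h0 | h0
  · have hz : ∀ i ∈ F, p i = 0 := by
      intro i hi
      exact (Finset.sum_eq_zero_iff_of_nonneg hp).1 h0.symm i hi
    rw [← h0]
    calc ∑ i ∈ F, nlog2 (p i) = 0 := by
          apply Finset.sum_eq_zero; intro i hi; rw [hz i hi, nlog2_zero]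
      _ ≤ nlog2 0 + 0 * Real.logb 2 N := by simp [nlog2_zero]
  · have hFne : F.Nonempty := by
      by_contra h
      rw [Finset.not_nonempty_iff_eq_empty] at h
      simp [hs, h] at h0
    have hc0 : (0 : ℝ) < F.card := by exact_mod_cast Finset.card_pos.2 hFne
    set c : ℝ := (F.card : ℝ)⁻¹ with hc
    have hcpos : 0 < c := by positivity
    have hj := concaveOn_nlog2.le_map_sum (t := F) (w := fun _ => c) (p := p)
      (fun i _ => hcpos.le)
      (by simp [hc, Finset.sum_const, nsmul_eq_mul, mul_inv_cancel₀ (ne_of_gt hc0)])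
      (fun i hi => hp i hi)
    simp only [smul_eq_mul] at hj
    rw [← Finset.mul_sum, ← Finset.mul_sum, ← hs] at hj
    have hkey : nlog2 (c * s) = c * (nlog2 s + s * Real.logb 2 (F.card : ℝ)) := by
      rw [nlog2, nlog2, Real.logb_mul (ne_of_gt hcpos) (ne_of_gt h0), hc,
        Real.logb_inv]
      ring
    rw [hkey] at hj
    have h2 : ∑ i ∈ F, nlog2 (p i) ≤ nlog2 s + s * Real.logb 2 (F.card : ℝ) :=
      le_of_mul_le_mul_left hj hcpos
    refine h2.trans ?_
    exact add_le_add_right (mul_le_mul_of_nonneg_left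
      (Real.logb_le_logb_of_le one_lt_two hc0 hcard) hs0) _

/-! ### Auxiliary lemmas on dyadic intervals -/

lemma mem_dyadicI {n : ℕ} {k : ℤ} {x : ℝ} :
    x ∈ dyadicI n k ↔ (k : ℝ) ≤ x * 2 ^ n ∧ x * 2 ^ n < (k : ℝ) + 1 := by
  have h : (0:ℝ) < 2 ^ n := by positivity
  simp only [dyadicI, Set.mem_Ico, div_le_iff₀ h, lt_div_iff₀ h]

lemma eq_floor_of_mem_dyadicI {n : ℕ} {k : ℤ} {x : ℝ} (h : x ∈ dyadicI n k) :
    k = ⌊x * 2 ^ n⌋ := by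
  rw [mem_dyadicI] at h
  exact (Int.floor_eq_iff.2 ⟨h.1, h.2⟩).symm

lemma mem_dyadicI_floor (n : ℕ) (x : ℝ) : x ∈ dyadicI n ⌊x * 2 ^ n⌋ := by
  rw [mem_dyadicI]
  exact ⟨Int.floor_le _, Int.lt_floor_add_one _⟩

lemma dyadicI_disjoint {n : ℕ} {k k' : ℤ} (h : k ≠ k') :
    Disjoint (dyadicI n k) (dyadicI n k') := by
  rw [Set.disjoint_left]
  intro x hx hx'
  exact h ((eq_floor_of_mem_dyadicI hx).trans (eq_floor_of_mem_dyadicI hx').symm)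

lemma dyadicI_succ_subset {n : ℕ} {j k : ℤ} {x : ℝ}
    (hj : x ∈ dyadicI (n+1) j) (hk : x ∈ dyadicI n k) :
    dyadicI (n+1) j ⊆ dyadicI n k := by
  rw [mem_dyadicI] at hj hk
  have hp : x * 2 ^ (n+1) = (x * 2 ^ n) * 2 := by ring
  have h1 : (j:ℝ) < 2 * ((k:ℝ) + 1) := by nlinarith [hj.1, hk.2]
  have h2 : 2 * (k:ℝ) < (j:ℝ) + 1 := by nlinarith [hj.2, hk.1]
  have h1' : j ≤ 2 * k + 1 :=
    Int.lt_add_one_iff.mp (by exact_mod_cast (by push_cast; linarith : (j:ℝ) < 2*(k:ℝ)+1+1))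
  have h2' : 2 * k ≤ j :=
    Int.lt_add_one_iff.mp (by exact_mod_cast (by push_cast; linarith : (2*(k:ℝ)) < (j:ℝ)+1))
  intro y hy
  rw [mem_dyadicI] at hy ⊢
  have hyp : y * 2 ^ (n+1) = (y * 2 ^ n) * 2 := by ring
  rw [hyp] at hy
  have hc1 : (j:ℝ) ≤ 2*(k:ℝ)+1 := by exact_mod_cast h1'
  have hc2 : (2*(k:ℝ)) ≤ j := by exact_mod_cast h2'
  exact ⟨by nlinarith [hy.1], by nlinarith [hy.2]⟩

lemma volume_dyadicI (n : ℕ) (k : ℤ) :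
    volume (dyadicI n k) = ENNReal.ofReal (((2:ℝ) ^ n)⁻¹) := by
  rw [dyadicI, Real.volume_Ico]
  congr 1
  field_simp
  ring

lemma dyadicI_measurable (n : ℕ) (k : ℤ) : MeasurableSet (dyadicI n k) :=
  measurableSet_Ico

lemma dyadicI_subset_compl {n : ℕ} {k : ℤ} (hk : k ∉ Finset.Icc (0:ℤ) (2^n)) :
    dyadicI n k ⊆ (Set.Icc (0:ℝ) 1)ᶜ := by
  intro x hx
  rw [mem_dyadicI] at hx
  simp only [Finset.mem_Icc, not_and_or, not_le] at hk
  have h2 : (0:ℝ) < 2 ^ n := by positivity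
  simp only [Set.mem_compl_iff, Set.mem_Icc, not_and_or, not_le]
  rcases hk with hk | hk
  · left
    have hk1 : (k:ℝ) + 1 ≤ 0 := by
      have : k + 1 ≤ 0 := hk
      exact_mod_cast this
    nlinarith [hx.2]
  · right
    have hk1 : (2:ℝ)^n + 1 ≤ (k:ℝ) := by
      have : (2:ℤ)^n + 1 ≤ k := hk
      exact_mod_cast this
    nlinarith [hx.1]

/-- Core quantitative estimate: if `U` is open with small Lebesgue measure and the entropy
lower bound holds, then `μ U` is small. -/
lemma key (μ : Measure ℝ) [IsProbabilityMeasure μ]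
    (hsupp : μ (Set.Icc (0 : ℝ) 1) = 1)
    (M : ℝ) (hent : ∀ n : ℕ, (n : ℝ) - M ≤ scaleEnt μ n)
    (U : Set ℝ) (hU : IsOpen U) (m : ℕ) (hm : 0 < m)
    (hvol : volume U ≤ ENNReal.ofReal (((2:ℝ) ^ m)⁻¹)) :
    μ U ≤ ENNReal.ofReal ((M + 5) / m) := by
  classical
  have hcompl : μ (Set.Icc (0:ℝ) 1)ᶜ = 0 := by
    rw [measure_compl measurableSet_Icc (measure_ne_top μ _), hsupp, measure_univ]
    simp
  set A : ℕ → Set ℝ := fun n => ⋃ (k : ℤ) (_ : dyadicI n k ⊆ U), dyadicI n k with hA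
  have main : ∀ n : ℕ, μ (A n) ≤ ENNReal.ofReal ((M + 5) / m) := by
    intro n
    set T : Finset ℤ := Finset.Icc 0 (2^n) with hT
    set T₁ : Finset ℤ := T.filter (fun k => dyadicI n k ⊆ U) with hT₁
    set T₂ : Finset ℤ := T.filter (fun k => ¬ dyadicI n k ⊆ U) with hT₂
    set p : ℤ → ℝ := fun k => (μ (dyadicI n k)).toReal with hp
    have hp0 : ∀ k, 0 ≤ p k := fun k => ENNReal.toReal_nonneg
    have hpout : ∀ k ∉ T, p k = 0 := by
      intro k hk
      have : μ (dyadicI n k) = 0 := measure_mono_null (dyadicI_subset_compl hk) hcompl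
      simp [hp, this]
    -- entropy as a finite sum
    have hent_eq : scaleEnt μ n = ∑ k ∈ T, nlog2 (p k) := by
      apply tsum_eq_sum
      intro k hk
      rw [show (μ (dyadicI n k)).toReal = 0 from hpout k hk, nlog2_zero]
    -- total mass 1
    have hdisj : (T : Set ℤ).PairwiseDisjoint (dyadicI n) :=
      fun a _ b _ hab => dyadicI_disjoint hab
    have hdisj1 : (T₁ : Set ℤ).PairwiseDisjoint (dyadicI n) :=
      fun a _ b _ hab => dyadicI_disjoint hab
    have hUnion : μ (⋃ k ∈ T, dyadicI n k) = ∑ k ∈ T, μ (dyadicI n k) :=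
      measure_biUnion_finset hdisj (fun k _ => dyadicI_measurable n k)
    have hge : (1:ENNReal) ≤ μ (⋃ k ∈ T, dyadicI n k) := by
      rw [← hsupp]
      apply measure_mono
      intro x hx
      have h2 : (0:ℝ) < 2 ^ n := by positivity
      refine Set.mem_biUnion (Finset.mem_Icc.mpr ?_) (mem_dyadicI_floor n x)
      constructor
      · exact Int.le_floor.2 (by push_cast; nlinarith [hx.1])
      · have hle : x * 2 ^ n ≤ (((2:ℤ)^n : ℤ) : ℝ) := by push_cast; nlinarith [hx.2]
        have := Int.floor_le_floor hle
        rwa [Int.floor_intCast] at this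
    have hsumT : ∑ k ∈ T, μ (dyadicI n k) = 1 :=
      le_antisymm (hUnion ▸ prob_le_one) (hUnion ▸ hge)
    have hsum1 : ∑ k ∈ T, p k = 1 := by
      rw [hp, ← ENNReal.toReal_sum (fun k _ => measure_ne_top μ _), hsumT, ENNReal.toReal_one]
    -- cardinality bound on T₁
    have hcard1 : (T₁.card : ℝ) ≤ 2^n * ((2:ℝ)^m)⁻¹ := by
      have hsub : (⋃ k ∈ T₁, dyadicI n k) ⊆ U := by
        intro x hx
        obtain ⟨k, hk, hxk⟩ := Set.mem_iUnion₂.1 hx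
        exact (Finset.mem_filter.1 hk).2 hxk
      have hvol1 : volume (⋃ k ∈ T₁, dyadicI n k) = ∑ k ∈ T₁, volume (dyadicI n k) :=
        measure_biUnion_finset hdisj1 (fun k _ => dyadicI_measurable n k)
      have : ENNReal.ofReal ((T₁.card : ℝ) * ((2:ℝ)^n)⁻¹) ≤ ENNReal.ofReal (((2:ℝ)^m)⁻¹) := by
        calc ENNReal.ofReal ((T₁.card : ℝ) * ((2:ℝ)^n)⁻¹)
            = ∑ k ∈ T₁, volume (dyadicI n k) := by
              simp only [volume_dyadicI, Finset.sum_const, nsmul_eq_mul]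
              rw [ENNReal.ofReal_mul (by positivity), ENNReal.ofReal_natCast]
          _ = volume (⋃ k ∈ T₁, dyadicI n k) := hvol1.symm
          _ ≤ volume U := measure_mono hsub
          _ ≤ _ := hvol
      have h2 := (ENNReal.ofReal_le_ofReal_iff (by positivity)).1 this
      calc (T₁.card : ℝ) = ((T₁.card : ℝ) * ((2:ℝ)^n)⁻¹) * 2^n := by field_simp
        _ ≤ ((2:ℝ)^m)⁻¹ * 2^n := mul_le_mul_of_nonneg_right h2 (by positivity)
        _ = 2^n * ((2:ℝ)^m)⁻¹ := mul_comm _ _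
    -- cardinality bound on T₂
    have hcard2 : (T₂.card : ℝ) ≤ 2^(n+1) := by
      have h1 : T₂.card ≤ T.card := Finset.card_filter_le _ _
      have h2 : (T.card : ℤ) = 2^n + 1 := by
        rw [hT, Int.card_Icc]
        rw [Int.toNat_of_nonneg (by have := pow_nonneg (by norm_num : (0:ℤ) ≤ 2) n; omega)]
        ring
      have h3 : (T.card : ℝ) = 2^n + 1 := by exact_mod_cast h2
      have h4 : (1:ℝ) ≤ 2^n := one_le_pow₀ (by norm_num)
      calc (T₂.card : ℝ) ≤ (T.card : ℝ) := by exact_mod_cast h1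
        _ = 2^n + 1 := h3
        _ ≤ 2^(n+1) := by rw [pow_succ]; nlinarith
    -- Jensen on both halves
    set s₁ : ℝ := ∑ k ∈ T₁, p k with hs₁
    set s₂ : ℝ := ∑ k ∈ T₂, p k with hs₂
    have hsplit : ∑ k ∈ T, nlog2 (p k) = ∑ k ∈ T₁, nlog2 (p k) + ∑ k ∈ T₂, nlog2 (p k) :=
      (Finset.sum_filter_add_sum_filter_not T _ _).symm
    have hssum : s₁ + s₂ = 1 := by
      rw [hs₁, hs₂, Finset.sum_filter_add_sum_filter_not T _ p, hsum1]
    have hs₁0 : 0 ≤ s₁ := Finset.sum_nonneg (fun i _ => hp0 i)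
    have hs₂0 : 0 ≤ s₂ := Finset.sum_nonneg (fun i _ => hp0 i)
    have hJ1 := sum_nlog2_le T₁ p (fun i _ => hp0 i) hcard1
    have hJ2 := sum_nlog2_le T₂ p (fun i _ => hp0 i) hcard2
    have hlogb1 : Real.logb 2 ((2:ℝ)^n * ((2:ℝ)^m)⁻¹) = (n:ℝ) - m := by
      rw [Real.logb_mul (by positivity) (by positivity), Real.logb_inv,
        Real.logb_pow, Real.logb_pow, Real.logb_self_eq_one (by norm_num)]
      ring
    have hlogb2 : Real.logb 2 ((2:ℝ)^(n+1)) = (n:ℝ) + 1 := by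
      rw [Real.logb_pow, Real.logb_self_eq_one (by norm_num)]
      push_cast
      ring
    rw [hlogb1, ← hs₁] at hJ1
    rw [hlogb2, ← hs₂] at hJ2
    have hb1 : nlog2 s₁ ≤ 2 := nlog2_le_two hs₁0
    have hb2 : nlog2 s₂ ≤ 2 := nlog2_le_two hs₂0
    have hentn := hent n
    rw [scaleEnt] at hentn
    have hentn' : (n:ℝ) - M ≤ ∑ k ∈ T, nlog2 (p k) := by rwa [← hent_eq]
    have e1 : s₁ * ((n:ℝ) - m) + s₂ * ((n:ℝ) + 1) = (n:ℝ) + s₂ - s₁ * m := by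
      linear_combination (n:ℝ) * hssum
    have hfinal : s₁ * m ≤ M + 5 := by linarith [hJ1, hJ2, hb1, hb2, hentn', hsplit ▸ hentn', e1]
    -- bound μ (A n)
    have hA_le : μ (A n) ≤ ENNReal.ofReal s₁ := by
      have hsub : A n ⊆ (⋃ k ∈ T₁, dyadicI n k) ∪ (Set.Icc (0:ℝ) 1)ᶜ := by
        intro x hx
        simp only [hA, Set.mem_iUnion] at hx
        obtain ⟨k, hkU, hxk⟩ := hx
        by_cases hk : k ∈ T
        · exact Or.inl (Set.mem_biUnion (Finset.mem_filter.2 ⟨hk, hkU⟩) hxk)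
        · exact Or.inr (dyadicI_subset_compl hk hxk)
      calc μ (A n) ≤ μ (⋃ k ∈ T₁, dyadicI n k) + μ (Set.Icc (0:ℝ) 1)ᶜ :=
            (measure_mono hsub).trans (measure_union_le _ _)
        _ = μ (⋃ k ∈ T₁, dyadicI n k) := by rw [hcompl, add_zero]
        _ = ∑ k ∈ T₁, μ (dyadicI n k) :=
            measure_biUnion_finset hdisj1 (fun k _ => dyadicI_measurable n k)
        _ = ENNReal.ofReal s₁ := by
            rw [hs₁, ENNReal.ofReal_sum_of_nonneg (fun i _ => hp0 i)]
            exact Finset.sum_congr rfl fun k _ => (ENNReal.ofReal_toReal (measure_ne_top μ _)).symm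
    refine hA_le.trans (ENNReal.ofReal_le_ofReal ?_)
    rw [le_div_iff₀ (by exact_mod_cast hm)]
    exact hfinal
  -- pass to the union
  have hmono : Monotone A := by
    apply monotone_nat_of_le_succ
    intro n x hx
    simp only [hA, Set.mem_iUnion] at hx ⊢
    obtain ⟨k, hkU, hxk⟩ := hx
    exact ⟨⌊x * 2^(n+1)⌋, (dyadicI_succ_subset (mem_dyadicI_floor (n+1) x) hxk).trans hkU,
      mem_dyadicI_floor (n+1) x⟩
  have hcover : U ⊆ ⋃ n, A n := by
    intro x hx
    obtain ⟨ε, hε, hball⟩ := Metric.isOpen_iff.1 hU x hx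
    obtain ⟨n, hn⟩ : ∃ n : ℕ, ((2:ℝ)^n)⁻¹ < ε := by
      obtain ⟨n, hn⟩ := pow_unbounded_of_one_lt ε⁻¹ (by norm_num : (1:ℝ) < 2)
      have := inv_strictAnti₀ (inv_pos.2 hε) hn
      rw [inv_inv] at this
      exact ⟨n, this⟩
    refine Set.mem_iUnion.2 ⟨n, ?_⟩
    simp only [hA, Set.mem_iUnion]
    refine ⟨⌊x * 2^n⌋, ?_, mem_dyadicI_floor n x⟩
    intro y hy
    apply hball
    rw [Metric.mem_ball, Real.dist_eq, abs_sub_lt_iff]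
    have hxm := mem_dyadicI_floor n x
    rw [mem_dyadicI] at hxm hy
    have h2 : (0:ℝ) < 2^n := by positivity
    have hinv : ((2:ℝ)^n)⁻¹ * 2^n = 1 := inv_mul_cancel₀ (ne_of_gt h2)
    constructor
    · nlinarith [hy.2, hxm.1]
    · nlinarith [hy.1, hxm.2]
  have hmeas : ∀ n, MeasurableSet (A n) := by
    intro n
    exact MeasurableSet.iUnion fun k => MeasurableSet.iUnion fun _ => dyadicI_measurable n k
  calc μ U ≤ μ (⋃ n, A n) := measure_mono hcover
    _ = ⨆ n, μ (A n) := hmono.directed_le.measure_iUnion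
    _ ≤ ENNReal.ofReal ((M + 5) / m) := iSup_le main

/-- Garsia: a probability measure on `[0,1]` with `H_n(μ) ≥ n − M` for all `n`
is absolutely continuous. -/
theorem stmt7 (μ : Measure ℝ) [IsProbabilityMeasure μ]
    (hsupp : μ (Set.Icc (0 : ℝ) 1) = 1)
    (M : ℝ) (hent : ∀ n : ℕ, (n : ℝ) - M ≤ scaleEnt μ n) :
    μ ≪ (volume : Measure ℝ) := by
  refine Measure.AbsolutelyContinuous.mk fun s hms hs => ?_
  by_contra hμs
  have hε : 0 < (μ s).toReal := ENNReal.toReal_pos hμs (measure_ne_top μ s)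
  obtain ⟨m, hm⟩ := exists_nat_gt ((M + 5) / (μ s).toReal)
  set m' : ℕ := m + 1 with hm'
  have hm'pos : 0 < m' := Nat.succ_pos m
  have hm'gt : (M + 5) / (μ s).toReal < m' := by
    refine hm.trans_le ?_
    exact_mod_cast Nat.le_succ m
  have hlt : volume s < ENNReal.ofReal (((2:ℝ)^m')⁻¹) := by
    rw [hs]
    exact ENNReal.ofReal_pos.2 (by positivity)
  obtain ⟨U, hsU, hUopen, hUvol⟩ := Set.exists_isOpen_lt_of_lt s _ hlt
  have hkey := key μ hsupp M hent U hUopen m' hm'pos hUvol.le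
  have hle : μ s ≤ ENNReal.ofReal ((M + 5) / m') := (measure_mono hsU).trans hkey
  have hlt2 : ENNReal.ofReal ((M + 5) / m') < μ s := by
    have hdiv : (M + 5) / m' < (μ s).toReal := by
      rw [div_lt_iff₀ (by exact_mod_cast hm'pos)]
      rw [div_lt_iff₀ hε] at hm'gt
      linarith
    calc ENNReal.ofReal ((M + 5) / m') < ENNReal.ofReal ((μ s).toReal) :=
          ENNReal.ofReal_lt_ofReal_iff hε |>.2 hdiv
      _ = μ s := ENNReal.ofReal_toReal (measure_ne_top μ s)
  exact absurd hle (not_le.2 hlt2)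

end
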